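/- Thermal two-qubit heat formula: if the two-qubit state ρ has thermal marginals at inverse temperatures β_A, β_B for local Hamiltonians H_i = (ω/2)(1-σ_z), then the diagonal entries satisfy p_{01} - p_{10} = (1/2)[tanh(ωβ_A/2) - tanh(ωβ_B/2)], and hence the resonant heat formula becomes ⟨Q_A⟩ = ω[(1/2)sin²(gt)(tanh(ωβ_A/2) - tanh(ωβ_B/2)) + η sin(2gt) sin(ξ-θ)]. -/

import Mathlib

/-! The marginal conditions fix `p₀₀ + p₀₁` and `p₀₀ + p₁₀`, so their difference is
`p₀₁ - p₁₀`, and `1 / (1 + e^{-x}) = (1 + tanh (x / 2)) / 2`.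

The interaction acts only on `span {|01⟩, |10⟩}`, as `g (a P + K)` with `P` the projector onto
that block and `K` an involution of it with eigenvectors `|01⟩ ± e^{-iθ} |10⟩`. Hence
`U = (1 - P) + e^{-igat} (cos (gt) P - i sin (gt) K)`, and conjugating `H_A ⊗ 1` by `U` leaves
`ω sin² (gt)` on the populations of the block and `ω sin (gt) cos (gt)` on its coherences.
Tracing against the Hermitian `ρ` turns the pair of coherences `η e^{± iξ}` into
`η sin (ξ - θ)`. -/

open Matrix ComplexOrder Kronecker NormedSpace

/-- The Pauli `Z` matrix. -/
def σz : Matrix (Fin 2) (Fin 2) ℂ := Matrix.diagonal ![1, -1]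

/-- The Zeeman Hamiltonian `(ω/2)(1 - σ_z)`. -/
noncomputable def zeeman (ω : ℝ) : Matrix (Fin 2) (Fin 2) ℂ :=
  ((ω / 2 : ℝ) : ℂ) • ((1 : Matrix (Fin 2) (Fin 2) ℂ) - σz)

/-- The matrix unit `|p⟩⟨q|` on the two-qubit space. -/
def E (p q : Fin 2 × Fin 2) : Matrix (Fin 2 × Fin 2) (Fin 2 × Fin 2) ℂ :=
  Matrix.single p q 1

/-- The general energy-conserving resonant two-qubit interaction Hamiltonian
`g(a(|01⟩⟨01|+|10⟩⟨10|) + e^{iθ}|01⟩⟨10| + e^{-iθ}|10⟩⟨01|)`. -/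
noncomputable def HIres (g a θ : ℝ) : Matrix (Fin 2 × Fin 2) (Fin 2 × Fin 2) ℂ :=
  (g : ℂ) • ((a : ℂ) • (E (0, 1) (0, 1) + E (1, 0) (1, 0))
    + Complex.exp (θ * Complex.I) • E (0, 1) (1, 0)
    + Complex.exp (-θ * Complex.I) • E (1, 0) (0, 1))

/-- Partial trace over the second qubit. -/
noncomputable def ptraceB (ρ : Matrix (Fin 2 × Fin 2) (Fin 2 × Fin 2) ℂ) :
    Matrix (Fin 2) (Fin 2) ℂ :=
  Matrix.of fun i j => ∑ k : Fin 2, ρ (i, k) (j, k)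

/-- Partial trace over the first qubit. -/
noncomputable def ptraceA (ρ : Matrix (Fin 2 × Fin 2) (Fin 2 × Fin 2) ℂ) :
    Matrix (Fin 2) (Fin 2) ℂ :=
  Matrix.of fun i j => ∑ k : Fin 2, ρ (k, i) (k, j)

/-- The single-qubit Gibbs state for `H = (ω/2)(1-σ_z)`, i.e.
`diag(1, e^{-ωβ})/Z` with `Z = 1 + e^{-ωβ}`. -/
noncomputable def qubitGibbs (ω β : ℝ) : Matrix (Fin 2) (Fin 2) ℂ :=
  Matrix.diagonal ![((1 / (1 + Real.exp (-(ω * β))) : ℝ) : ℂ),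
    ((Real.exp (-(ω * β)) / (1 + Real.exp (-(ω * β))) : ℝ) : ℂ)]

open ComplexConjugate

lemma Matrix.exp_conj_of_mul_eq_one {m 𝔸 : Type*} [Fintype m] [DecidableEq m]
    [NormedCommRing 𝔸] [NormedAlgebra ℚ 𝔸] [CompleteSpace 𝔸]
    {W W' : Matrix m m 𝔸} (h : W * W' = 1) (A : Matrix m m 𝔸) :
    exp (W * A * W') = W * exp A * W' := by
  rw [← Matrix.inv_eq_right_inv h]
  exact Matrix.exp_conj W A
    ((Matrix.isUnit_iff_isUnit_det W).2 (Matrix.isUnit_det_of_right_inverse h))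

lemma E_apply (p q i j : Fin 2 × Fin 2) :
    E p q i j = if p = i ∧ q = j then 1 else 0 := rfl

def midProj : Matrix (Fin 2 × Fin 2) (Fin 2 × Fin 2) ℂ := E (0, 1) (0, 1) + E (1, 0) (1, 0)

def hopping (u v : ℂ) : Matrix (Fin 2 × Fin 2) (Fin 2 × Fin 2) ℂ :=
  u • E (0, 1) (1, 0) + v • E (1, 0) (0, 1)

/-- Columns `|01⟩ + v |10⟩` and `|01⟩ - v |10⟩`: eigenvectors of `hopping u v` for the
eigenvalues `± 1` when `u v = 1`. -/
def hoppingEigenbasis (v : ℂ) : Matrix (Fin 2 × Fin 2) (Fin 2 × Fin 2) ℂ :=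
  1 - midProj + E (0, 1) (0, 1) + E (0, 1) (1, 0) + v • E (1, 0) (0, 1) - v • E (1, 0) (1, 0)

noncomputable def hoppingEigenbasisInv (u : ℂ) : Matrix (Fin 2 × Fin 2) (Fin 2 × Fin 2) ℂ :=
  1 - midProj + (1 / 2 : ℂ) • (E (0, 1) (0, 1) + u • E (0, 1) (1, 0) + E (1, 0) (0, 1)
    - u • E (1, 0) (1, 0))

def midDiagonal (p q r : ℂ) : Matrix (Fin 2 × Fin 2) (Fin 2 × Fin 2) ℂ :=
  diagonal fun i => if i = (0, 1) then p else if i = (1, 0) then q else r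

lemma hoppingEigenbasis_mul_inv {u v : ℂ} (huv : u * v = 1) :
    hoppingEigenbasis v * hoppingEigenbasisInv u = 1 := by
  ext ⟨i, k⟩ ⟨j, l⟩
  fin_cases i <;> fin_cases k <;> fin_cases j <;> fin_cases l <;>
    simp only [hoppingEigenbasis, hoppingEigenbasisInv, midProj, Matrix.mul_apply,
      Fintype.sum_prod_type, Fin.sum_univ_two, Matrix.add_apply, Matrix.sub_apply,
      Matrix.smul_apply, smul_eq_mul, E_apply, Matrix.one_apply, Prod.mk.injEq] <;> grind

lemma smul_midProj_add_smul_hopping {u v : ℂ} (huv : u * v = 1) (x y : ℂ) :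
    x • midProj + y • hopping u v
      = hoppingEigenbasis v * midDiagonal (x + y) (x - y) 0 * hoppingEigenbasisInv u := by
  ext ⟨i, k⟩ ⟨j, l⟩
  fin_cases i <;> fin_cases k <;> fin_cases j <;> fin_cases l <;>
    simp only [hoppingEigenbasis, hoppingEigenbasisInv, midProj, hopping, midDiagonal,
      Matrix.mul_apply, Fintype.sum_prod_type, Fin.sum_univ_two, Matrix.add_apply,
      Matrix.sub_apply, Matrix.smul_apply, smul_eq_mul, E_apply, Matrix.one_apply,
      Matrix.diagonal_apply, Prod.mk.injEq] <;> grind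

lemma hoppingEigenbasis_mul_midDiagonal_mul_inv {u v : ℂ} (huv : u * v = 1) (p q : ℂ) :
    hoppingEigenbasis v * midDiagonal p q 1 * hoppingEigenbasisInv u
      = 1 - midProj + ((p + q) / 2) • midProj + ((p - q) / 2) • hopping u v := by
  ext ⟨i, k⟩ ⟨j, l⟩
  fin_cases i <;> fin_cases k <;> fin_cases j <;> fin_cases l <;>
    simp only [hoppingEigenbasis, hoppingEigenbasisInv, midProj, hopping, midDiagonal,
      Matrix.mul_apply, Fintype.sum_prod_type, Fin.sum_univ_two, Matrix.add_apply,
      Matrix.sub_apply, Matrix.smul_apply, smul_eq_mul, E_apply, Matrix.one_apply,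
      Matrix.diagonal_apply, Prod.mk.injEq] <;> grind

lemma exp_midDiagonal (p q r : ℂ) :
    exp (midDiagonal p q r) = midDiagonal (Complex.exp p) (Complex.exp q) (Complex.exp r) := by
  rw [midDiagonal, Matrix.exp_diagonal]
  congr 1
  funext i
  rw [Pi.coe_exp, ← Complex.exp_eq_exp_ℂ]
  split_ifs <;> rfl

lemma exp_smul_midProj_add_smul_hopping {u v : ℂ} (huv : u * v = 1) (x y : ℂ) :
    exp (x • midProj + y • hopping u v)
      = 1 - midProj + (Complex.exp x * Complex.cosh y) • midProj
        + (Complex.exp x * Complex.sinh y) • hopping u v := by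
  rw [smul_midProj_add_smul_hopping huv,
    Matrix.exp_conj_of_mul_eq_one (hoppingEigenbasis_mul_inv huv), exp_midDiagonal,
    Complex.exp_zero, hoppingEigenbasis_mul_midDiagonal_mul_inv huv, Complex.cosh,
    Complex.sinh, sub_eq_add_neg x, Complex.exp_add, Complex.exp_add]
  congr 3 <;> ring

lemma exp_mul_I_mul_exp_neg_mul_I (θ : ℝ) :
    Complex.exp (θ * Complex.I) * Complex.exp (-θ * Complex.I) = 1 := by
  rw [← Complex.exp_add, ← add_mul, add_neg_cancel, zero_mul, Complex.exp_zero]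

lemma conj_exp_mul_I (θ : ℝ) :
    conj (Complex.exp (θ * Complex.I)) = Complex.exp (-θ * Complex.I) := by
  rw [← Complex.exp_conj, map_mul, Complex.conj_ofReal, Complex.conj_I, neg_mul, mul_neg]

lemma HIres_eq (g a θ : ℝ) :
    HIres g a θ = ((g * a : ℝ) : ℂ) • midProj
      + (g : ℂ) • hopping (Complex.exp (θ * Complex.I)) (Complex.exp (-θ * Complex.I)) := by
  simp only [HIres, midProj, hopping, smul_add, smul_smul, Complex.ofReal_mul, add_assoc]

lemma exp_smul_HIres (g a θ t : ℝ) :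
    exp ((-(t : ℂ) * Complex.I) • HIres g a θ)
      = 1 - midProj
        + (Complex.exp ((-(t * (g * a)) : ℝ) * Complex.I) * Real.cos (g * t)) • midProj
        + (Complex.exp ((-(t * (g * a)) : ℝ) * Complex.I) * (-Real.sin (g * t) * Complex.I))
          • hopping (Complex.exp (θ * Complex.I)) (Complex.exp (-θ * Complex.I)) := by
  rw [HIres_eq, smul_add, smul_smul, smul_smul,
    exp_smul_midProj_add_smul_hopping (exp_mul_I_mul_exp_neg_mul_I θ),
    show -(t : ℂ) * Complex.I * g = ((-(g * t) : ℝ) : ℂ) * Complex.I by push_cast; ring,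
    Complex.cosh_mul_I, Complex.sinh_mul_I, ← Complex.ofReal_cos, ← Complex.ofReal_sin,
    Real.cos_neg, Real.sin_neg]
  push_cast
  ring_nf

lemma conjTranspose_mul_zeeman_kronecker_mul_sub (ω c s : ℝ) {φ u v : ℂ}
    (hφ : conj φ * φ = 1) (huv : u * v = 1) (hv : conj u = v) (hcs : c ^ 2 + s ^ 2 = 1)
    {U : Matrix (Fin 2 × Fin 2) (Fin 2 × Fin 2) ℂ}
    (hU : U = 1 - midProj + (φ * c) • midProj + (φ * (-s * Complex.I)) • hopping u v) :
    Uᴴ * (zeeman ω ⊗ₖ (1 : Matrix (Fin 2) (Fin 2) ℂ)) * U - zeeman ω ⊗ₖ 1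
      = (ω * s ^ 2 : ℂ) • (E (0, 1) (0, 1) - E (1, 0) (1, 0))
        + (ω * s * c * Complex.I) • (u • E (0, 1) (1, 0) - v • E (1, 0) (0, 1)) := by
  subst hU hv
  have hcs' : (c : ℂ) ^ 2 + (s : ℂ) ^ 2 = 1 := by exact_mod_cast hcs
  ext ⟨i, k⟩ ⟨j, l⟩
  fin_cases i <;> fin_cases k <;> fin_cases j <;> fin_cases l <;>
    simp [midProj, hopping, zeeman, σz, Matrix.mul_apply, Fintype.sum_prod_type, E_apply,
      Matrix.one_apply] <;> grind [Complex.I_mul_I]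

lemma trace_mul_midBlock (ρ : Matrix (Fin 2 × Fin 2) (Fin 2 × Fin 2) ℂ) (x y u v : ℂ) :
    (ρ * (x • (E (0, 1) (0, 1) - E (1, 0) (1, 0))
        + y • (u • E (0, 1) (1, 0) - v • E (1, 0) (0, 1)))).trace
      = x * (ρ (0, 1) (0, 1) - ρ (1, 0) (1, 0))
        + y * (u * ρ (1, 0) (0, 1) - v * ρ (0, 1) (1, 0)) := by
  simp [Matrix.trace, Matrix.mul_apply, Fintype.sum_prod_type, E_apply]
  ring

lemma exp_mul_I_mul_conj_sub (θ ξ η : ℝ) :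
    Complex.exp (θ * Complex.I) * conj (η * Complex.exp (ξ * Complex.I))
      - Complex.exp (-θ * Complex.I) * (η * Complex.exp (ξ * Complex.I))
      = -2 * Complex.I * (η * Real.sin (ξ - θ) : ℝ) := by
  rw [map_mul, Complex.conj_ofReal, conj_exp_mul_I]
  have h₁ : Complex.exp (θ * Complex.I) * Complex.exp (-ξ * Complex.I)
      = Complex.exp (-((ξ - θ : ℝ) : ℂ) * Complex.I) := by
    rw [← Complex.exp_add]; push_cast; ring_nf
  have h₂ : Complex.exp (-θ * Complex.I) * Complex.exp (ξ * Complex.I)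
      = Complex.exp (((ξ - θ : ℝ) : ℂ) * Complex.I) := by
    rw [← Complex.exp_add]; push_cast; ring_nf
  rw [Complex.ofReal_mul, Complex.ofReal_sin, Complex.sin]
  linear_combination (η : ℂ) * h₁ - (η : ℂ) * h₂
    + (η : ℂ) * (Complex.exp (-((ξ - θ : ℝ) : ℂ) * Complex.I)
      - Complex.exp (((ξ - θ : ℝ) : ℂ) * Complex.I)) * Complex.I_sq

lemma sub_eq_ptraceB_sub_ptraceA (ρ : Matrix (Fin 2 × Fin 2) (Fin 2 × Fin 2) ℂ) :
    ρ (0, 1) (0, 1) - ρ (1, 0) (1, 0) = ptraceB ρ 0 0 - ptraceA ρ 0 0 := by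
  simp only [ptraceB, ptraceA, Matrix.of_apply, Fin.sum_univ_two]
  ring

lemma one_div_one_add_exp_neg (x : ℝ) :
    1 / (1 + Real.exp (-x)) = (1 + Real.tanh (x / 2)) / 2 := by
  have hx : Real.exp x = Real.exp (x / 2) ^ 2 := by rw [← Real.exp_nat_mul]; ring_nf
  rw [Real.tanh_eq_sinh_div_cosh, Real.sinh_eq, Real.cosh_eq, Real.exp_neg, Real.exp_neg, hx]
  field_simp
  ring

lemma qubitGibbs_zero_zero (ω β : ℝ) :
    qubitGibbs ω β 0 0 = (((1 + Real.tanh (ω * β / 2)) / 2 : ℝ) : ℂ) := by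
  rw [qubitGibbs, Matrix.diagonal_apply_eq, Matrix.cons_val_zero, one_div_one_add_exp_neg]

theorem thermal_two_qubit_heat_general
    (ω g a θ ξ η t βA βB : ℝ)
    (ρ : Matrix (Fin 2 × Fin 2) (Fin 2 × Fin 2) ℂ) (hρ : ρ.PosSemidef)
    (hmargA : ptraceB ρ = qubitGibbs ω βA) (hmargB : ptraceA ρ = qubitGibbs ω βB)
    (hcoh : ρ (0, 1) (1, 0) = (η : ℂ) * Complex.exp (ξ * Complex.I))
    (U : Matrix (Fin 2 × Fin 2) (Fin 2 × Fin 2) ℂ)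
    (hU : U = exp ((-(t : ℂ) * Complex.I) • HIres g a θ)) :
    ρ (0, 1) (0, 1) - ρ (1, 0) (1, 0)
        = (((1 / 2) * (Real.tanh (ω * βA / 2) - Real.tanh (ω * βB / 2)) : ℝ) : ℂ)
      ∧ (ρ * (Uᴴ * (zeeman ω ⊗ₖ (1 : Matrix (Fin 2) (Fin 2) ℂ)) * U
          - zeeman ω ⊗ₖ (1 : Matrix (Fin 2) (Fin 2) ℂ))).trace
        = ((ω * ((1 / 2) * Real.sin (g * t) ^ 2
              * (Real.tanh (ω * βA / 2) - Real.tanh (ω * βB / 2))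
            + η * Real.sin (2 * g * t) * Real.sin (ξ - θ)) : ℝ) : ℂ) := by
  have hpop : ρ (0, 1) (0, 1) - ρ (1, 0) (1, 0)
      = (((1 / 2) * (Real.tanh (ω * βA / 2) - Real.tanh (ω * βB / 2)) : ℝ) : ℂ) := by
    rw [sub_eq_ptraceB_sub_ptraceA, hmargA, hmargB, qubitGibbs_zero_zero, qubitGibbs_zero_zero]
    push_cast
    ring
  have hphase : conj (Complex.exp ((-(t * (g * a)) : ℝ) * Complex.I))
      * Complex.exp ((-(t * (g * a)) : ℝ) * Complex.I) = 1 := by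
    rw [Complex.conj_mul', Complex.norm_exp_ofReal_mul_I, Complex.ofReal_one, one_pow]
  rw [exp_smul_HIres] at hU
  refine ⟨hpop, ?_⟩
  rw [conjTranspose_mul_zeeman_kronecker_mul_sub ω _ _ hphase (exp_mul_I_mul_exp_neg_mul_I θ)
      (conj_exp_mul_I θ) (Real.cos_sq_add_sin_sq (g * t)) hU,
    trace_mul_midBlock, hpop,
    show ρ (1, 0) (0, 1) = conj (ρ (0, 1) (1, 0)) from (hρ.1.apply _ _).symm, hcoh,
    exp_mul_I_mul_conj_sub, mul_assoc 2 g t, Real.sin_two_mul]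
  push_cast
  linear_combination
    -(2 * ω * η * Complex.sin (g * t) * Complex.cos (g * t) * Complex.sin (ξ - θ)) * Complex.I_sq

/-- Thermal two-qubit heat formula: thermal marginals force
`p₀₁ − p₁₀ = (1/2)[tanh(ωβ_A/2) − tanh(ωβ_B/2)]`, whence
`⟨Q_A⟩ = ω[(1/2)sin²(gt)(tanh(ωβ_A/2) − tanh(ωβ_B/2)) + η sin(2gt) sin(ξ−θ)]`. -/
theorem thermal_two_qubit_heat
    (ω g a θ ξ η t βA βB : ℝ) (hg : 0 < g)
    (ρ : Matrix (Fin 2 × Fin 2) (Fin 2 × Fin 2) ℂ) (hρ : ρ.PosSemidef)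
    (hρ1 : ρ.trace = 1)
    (hmargA : ptraceB ρ = qubitGibbs ω βA) (hmargB : ptraceA ρ = qubitGibbs ω βB)
    (hcoh : ρ (0, 1) (1, 0) = (η : ℂ) * Complex.exp (ξ * Complex.I))
    (U : Matrix (Fin 2 × Fin 2) (Fin 2 × Fin 2) ℂ)
    (hU : U = exp ((-(t : ℂ) * Complex.I) • HIres g a θ)) :
    ρ (0, 1) (0, 1) - ρ (1, 0) (1, 0)
        = (((1 / 2) * (Real.tanh (ω * βA / 2) - Real.tanh (ω * βB / 2)) : ℝ) : ℂ)
      ∧ (ρ * (Uᴴ * (zeeman ω ⊗ₖ (1 : Matrix (Fin 2) (Fin 2) ℂ)) * U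
          - zeeman ω ⊗ₖ (1 : Matrix (Fin 2) (Fin 2) ℂ))).trace
        = ((ω * ((1 / 2) * Real.sin (g * t) ^ 2
              * (Real.tanh (ω * βA / 2) - Real.tanh (ω * βB / 2))
            + η * Real.sin (2 * g * t) * Real.sin (ξ - θ)) : ℝ) : ℂ) :=
  thermal_two_qubit_heat_general ω g a θ ξ η t βA βB ρ hρ hmargA hmargB hcoh U hU
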